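/- For every (parametric) timed automaton A with clock set X of size n there exists an equivalent (parametric) non-resetting-test timed automaton A' with 2n clocks, i.e., the n clocks of a TA can be simulated by 2n nrtTA clocks: for every parameter interpretation and every timed ω-word, A' has an accepting run over that word if and only if A does. -/

import Mathlib

/-- Clock constraints over a set of clocks `X`, possibly mentioning one parameter `μ`:
`γ ::= z < c | z = c | z < μ | z = μ | ¬γ | γ ∧ γ`. -/
inductive ClockConstraint (X : Type) : Type where
  | ltC : X → ℕ → ClockConstraint X
  | eqC : X → ℕ → ClockConstraint X
  | ltP : X → ClockConstraint X
  | eqP : X → ClockConstraint X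
  | neg : ClockConstraint X → ClockConstraint X
  | conj : ClockConstraint X → ClockConstraint X → ClockConstraint X

namespace ClockConstraint

/-- Satisfaction of a clock constraint by a clock valuation `v`, under parameter value `μ`. -/
def sat {X : Type} (v : X → ℝ) (μ : ℝ) : ClockConstraint X → Prop
  | ltC z c => v z < (c : ℝ)
  | eqC z c => v z = (c : ℝ)
  | ltP z => v z < μ
  | eqP z => v z = μ
  | neg γ => ¬ sat v μ γ
  | conj γ₁ γ₂ => sat v μ γ₁ ∧ sat v μ γ₂

/-- The set of clocks occurring in a clock constraint. -/
def clocks {X : Type} : ClockConstraint X → Set X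
  | ltC z _ => {z}
  | eqC z _ => {z}
  | ltP z => {z}
  | eqP z => {z}
  | neg γ => clocks γ
  | conj γ₁ γ₂ => clocks γ₁ ∪ clocks γ₂

/-- Maximum constant appearing in a clock constraint. -/
def maxConst {X : Type} : ClockConstraint X → ℕ
  | ltC _ c => c
  | eqC _ c => c
  | ltP _ => 0
  | eqP _ => 0
  | neg γ => maxConst γ
  | conj γ₁ γ₂ => max (maxConst γ₁) (maxConst γ₂)

/-- Does the parameter occur in a constraint? -/
def hasParam {X : Type} : ClockConstraint X → Prop
  | ltP _ => True
  | eqP _ => True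
  | neg γ => hasParam γ
  | conj γ₁ γ₂ => hasParam γ₁ ∨ hasParam γ₂
  | _ => False

/-- Does a constant occur in a constraint? -/
def hasConst {X : Type} : ClockConstraint X → Prop
  | ltC _ _ => True
  | eqC _ _ => True
  | neg γ => hasConst γ
  | conj γ₁ γ₂ => hasConst γ₁ ∨ hasConst γ₂
  | _ => False

end ClockConstraint

/-- A (parametric) timed automaton with states `Q`, alphabet `A`, clocks `X`:
initial state, Büchi acceptance set, and transitions `q --(γ, a, S)--> q'`. -/
structure PTA (Q A X : Type) where
  init : Q
  acc : Set Q
  trans : Set (Q × ClockConstraint X × A × Set X × Q)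

/-- A (parametric) TA is a non-resetting-test TA if on every transition the clocks
tested in the guard are disjoint from the reset set. -/
def PTA.IsNrt {Q A X : Type} (M : PTA Q A X) : Prop :=
  ∀ t ∈ M.trans, t.2.1.clocks ∩ t.2.2.2.1 = ∅

/-- `q, v` is a (parametric) run of `M` over the timed ω-word `(π, τ)` under parameter
value `μ`.  Positions of the word are `1, 2, …`; conventionally `τ 0 = 0`. -/
def IsParamRun {Q A X : Type} (M : PTA Q A X) (μ : ℝ) (π : ℕ → A) (τ : ℕ → ℝ)
    (q : ℕ → Q) (v : ℕ → X → ℝ) : Prop :=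
  τ 0 = 0 ∧ (∀ i, 0 ≤ τ i) ∧ (∀ i, 1 ≤ i → τ i < τ (i + 1)) ∧
  q 0 = M.init ∧ (∀ z, v 0 z = 0) ∧
  ∀ i : ℕ, ∃ γ S, (q i, γ, π (i + 1), S, q (i + 1)) ∈ M.trans ∧
    ClockConstraint.sat (fun z => v i z + (τ (i + 1) - τ i)) μ γ ∧
    ∀ z, (z ∈ S → v (i + 1) z = 0) ∧
         (z ∉ S → v (i + 1) z = v i z + (τ (i + 1) - τ i))

/-- `M` has an accepting (parametric) run over the timed ω-word `(π, τ)` under `μ`: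
some accepting state occurs infinitely often along a run. -/
def AcceptsWord {Q A X : Type} (M : PTA Q A X) (μ : ℝ) (π : ℕ → A) (τ : ℕ → ℝ) : Prop :=
  ∃ q v, IsParamRun M μ π τ q v ∧ ∃ qf ∈ M.acc, ∀ n : ℕ, ∃ m, n ≤ m ∧ q m = qf

/-!
Each clock `z` of `M` is simulated by two copies, one of which is *active* at any time; a bit
vector stored in the control state records which. Where `M` resets `z`, the simulating automaton
instead resets the inactive copy and swaps the roles of the two copies, while guards only test
active copies. Thus no transition tests a clock it resets, and by induction along a run the active
copy of `z` always carries the value of `z`. Acceptance transfers forwards because only finitely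
many bit vectors exist, so one of them accompanies infinitely many visits to an accepting state.
-/

open Filter

namespace ClockConstraint

variable {X Y : Type}

def rename (f : X → Y) : ClockConstraint X → ClockConstraint Y
  | ltC z c => ltC (f z) c
  | eqC z c => eqC (f z) c
  | ltP z => ltP (f z)
  | eqP z => eqP (f z)
  | neg γ => neg (rename f γ)
  | conj γ₁ γ₂ => conj (rename f γ₁) (rename f γ₂)

theorem sat_rename (f : X → Y) (v : Y → ℝ) (μ : ℝ) (γ : ClockConstraint X) :
    (γ.rename f).sat v μ ↔ γ.sat (v ∘ f) μ := by
  induction γ <;> simp [rename, sat, *]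

theorem clocks_rename (f : X → Y) (γ : ClockConstraint X) :
    (γ.rename f).clocks = f '' γ.clocks := by
  induction γ <;> simp [rename, clocks, Set.image_union, *]

end ClockConstraint

def IsReset {X : Type} (S : Set X) (d : ℝ) (w w' : X → ℝ) : Prop :=
  ∀ z, (z ∈ S → w' z = 0) ∧ (z ∉ S → w' z = w z + d)

theorem IsReset.unique {X : Type} {S : Set X} {d : ℝ} {w w'₁ w'₂ : X → ℝ}
    (h₁ : IsReset S d w w'₁) (h₂ : IsReset S d w w'₂) : w'₁ = w'₂ := by
  funext z
  by_cases hz : z ∈ S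
  · rw [(h₁ z).1 hz, (h₂ z).1 hz]
  · rw [(h₁ z).2 hz, (h₂ z).2 hz]

noncomputable def resetSeq {X : Type} (S : ℕ → Set X) (τ : ℕ → ℝ) : ℕ → X → ℝ
  | 0 => fun _ => 0
  | i + 1 => open Classical in
      fun z => if z ∈ S i then 0 else resetSeq S τ i z + (τ (i + 1) - τ i)

theorem isReset_resetSeq {X : Type} (S : ℕ → Set X) (τ : ℕ → ℝ) (i : ℕ) :
    IsReset (S i) (τ (i + 1) - τ i) (resetSeq S τ i) (resetSeq S τ (i + 1)) := by
  intro z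
  constructor <;> intro hz <;> simp [resetSeq, hz]

namespace DoubleClocks

variable {X : Type}

def copy (t : Bool) (z : X) : X ⊕ X := if t then .inl z else .inr z

theorem copy_inj {t t' : Bool} {z z' : X} : copy t z = copy t' z' ↔ t = t' ∧ z = z' := by
  cases t <;> cases t' <;> simp [copy]

def activeCopy (b : X → Bool) (z : X) : X ⊕ X := copy (b z) z

def inactiveCopies (b : X → Bool) (S : Set X) : Set (X ⊕ X) := (fun z => copy (!b z) z) '' S

open Classical in
noncomputable def toggle (b : X → Bool) (S : Set X) : X → Bool :=
  fun z => if z ∈ S then !b z else b z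

noncomputable def toggleSeq (S : ℕ → Set X) : ℕ → X → Bool
  | 0 => fun _ => true
  | i + 1 => toggle (toggleSeq S i) (S i)

theorem copy_mem_inactiveCopies {b : X → Bool} {S : Set X} {t : Bool} {z : X} :
    copy t z ∈ inactiveCopies b S ↔ z ∈ S ∧ t = !b z := by
  simp only [inactiveCopies, Set.mem_image, copy_inj]
  constructor
  · rintro ⟨z, hz, ht, rfl⟩
    exact ⟨hz, ht.symm⟩
  · rintro ⟨hz, rfl⟩
    exact ⟨z, hz, rfl, rfl⟩

theorem activeCopy_notMem_inactiveCopies (b : X → Bool) (S : Set X) (z : X) :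
    activeCopy b z ∉ inactiveCopies b S := by
  simp [activeCopy, copy_mem_inactiveCopies]

theorem activeCopy_toggle_of_mem {b : X → Bool} {S : Set X} {z : X} (hz : z ∈ S) :
    activeCopy (toggle b S) z ∈ inactiveCopies b S := by
  simp [activeCopy, toggle, hz, copy_mem_inactiveCopies]

theorem activeCopy_toggle_of_notMem {b : X → Bool} {S : Set X} {z : X} (hz : z ∉ S) :
    activeCopy (toggle b S) z = activeCopy b z := by
  simp [activeCopy, toggle, hz]

theorem IsReset.activeCopy {b : X → Bool} {S : Set X} {d : ℝ} {w w' : X ⊕ X → ℝ}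
    (h : IsReset (inactiveCopies b S) d w w') :
    IsReset S d (w ∘ activeCopy b) (w' ∘ activeCopy (toggle b S)) := by
  intro z
  refine ⟨fun hz => (h _).1 (activeCopy_toggle_of_mem hz), fun hz => ?_⟩
  simp only [Function.comp_apply, activeCopy_toggle_of_notMem hz]
  exact (h _).2 (activeCopy_notMem_inactiveCopies b S z)

end DoubleClocks

namespace PTA

open DoubleClocks

variable {Q A X : Type}

noncomputable def liftTransition (b : X → Bool) :
    Q × ClockConstraint X × A × Set X × Q →
      (Q × (X → Bool)) × ClockConstraint (X ⊕ X) × A × Set (X ⊕ X) × (Q × (X → Bool))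
  | (q, γ, a, S, q') => ((q, b), γ.rename (activeCopy b), a, inactiveCopies b S, (q', toggle b S))

noncomputable def doubleClocks (M : PTA Q A X) : PTA (Q × (X → Bool)) A (X ⊕ X) where
  init := (M.init, fun _ => true)
  acc := {p | p.1 ∈ M.acc}
  trans := Set.image2 (fun t b => liftTransition b t) M.trans Set.univ

variable {M : PTA Q A X}

theorem mem_doubleClocks_trans {p p' : Q × (X → Bool)} {γ' : ClockConstraint (X ⊕ X)} {a : A}
    {S' : Set (X ⊕ X)} :
    (p, γ', a, S', p') ∈ M.doubleClocks.trans ↔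
      ∃ γ S, (p.1, γ, a, S, p'.1) ∈ M.trans ∧ γ' = γ.rename (activeCopy p.2) ∧
        S' = inactiveCopies p.2 S ∧ p'.2 = toggle p.2 S := by
  obtain ⟨q, b⟩ := p
  obtain ⟨q', b'⟩ := p'
  simp only [doubleClocks, Set.mem_image2, Set.mem_univ, true_and, Prod.exists, liftTransition,
    Prod.mk.injEq]
  constructor
  · rintro ⟨q, γ, a, S, q', ht, b, ⟨rfl, rfl⟩, rfl, rfl, rfl, rfl, rfl⟩
    exact ⟨γ, S, ht, rfl, rfl, rfl⟩
  · rintro ⟨γ, S, ht, rfl, rfl, rfl⟩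
    exact ⟨q, γ, a, S, q', ht, b, ⟨rfl, rfl⟩, rfl, rfl, rfl, rfl, rfl⟩

theorem doubleClocks_trans_finite [Finite X] (hfin : M.trans.Finite) :
    M.doubleClocks.trans.Finite :=
  hfin.image2 _ Set.finite_univ

theorem doubleClocks_isNrt : M.doubleClocks.IsNrt := by
  rintro _ ⟨⟨q, γ, a, S, q'⟩, -, b, -, rfl⟩
  refine Set.eq_empty_of_forall_notMem fun c ⟨hγ, hS⟩ => ?_
  simp only [liftTransition, ClockConstraint.clocks_rename] at hγ hS
  obtain ⟨z, -, rfl⟩ := hγ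
  exact activeCopy_notMem_inactiveCopies b S z hS

variable {μ : ℝ} {π : ℕ → A} {τ : ℕ → ℝ}

theorem IsParamRun.of_doubleClocks {q : ℕ → Q × (X → Bool)} {v : ℕ → X ⊕ X → ℝ}
    (h : IsParamRun M.doubleClocks μ π τ q v) :
    IsParamRun M μ π τ (fun i => (q i).1) (fun i => v i ∘ activeCopy (q i).2) := by
  obtain ⟨hτ0, hτnn, hτmono, hinit, hv0, hstep⟩ := h
  refine ⟨hτ0, hτnn, hτmono, by simp [hinit, doubleClocks], fun z => hv0 _, fun i => ?_⟩
  obtain ⟨γ', S', ht, hsat, hreset⟩ := hstep i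
  obtain ⟨γ, S, hM, rfl, rfl, hb⟩ := mem_doubleClocks_trans.1 ht
  refine ⟨γ, S, hM, (ClockConstraint.sat_rename _ _ _ _).1 hsat, ?_⟩
  have := IsReset.activeCopy hreset
  rwa [← hb] at this

theorem IsParamRun.exists_doubleClocks {q : ℕ → Q} {v : ℕ → X → ℝ}
    (h : IsParamRun M μ π τ q v) :
    ∃ (b : ℕ → X → Bool) (v' : ℕ → X ⊕ X → ℝ),
      IsParamRun M.doubleClocks μ π τ (fun i => (q i, b i)) v' := by
  obtain ⟨hτ0, hτnn, hτmono, hinit, hv0, hstep⟩ := h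
  choose γ S ht hsat hreset using hstep
  set b := toggleSeq S
  set v' := resetSeq (fun i => inactiveCopies (b i) (S i)) τ
  have hresetSeq (i : ℕ) := isReset_resetSeq (fun i => inactiveCopies (b i) (S i)) τ i
  have hactive (i : ℕ) : v' i ∘ activeCopy (b i) = v i := by
    induction i with
    | zero => funext z; exact (hv0 z).symm
    | succ i ih =>
      have h := IsReset.activeCopy (hresetSeq i)
      rw [ih] at h
      exact h.unique (hreset i)
  refine ⟨b, v', ⟨hτ0, hτnn, hτmono, by simp [hinit, doubleClocks, b, toggleSeq],
    fun _ => rfl, fun i => ⟨_, _, mem_doubleClocks_trans.2 ⟨γ i, S i, ht i, rfl, rfl, rfl⟩,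
    ?_, hresetSeq i⟩⟩⟩
  rw [ClockConstraint.sat_rename]
  convert hsat i using 2
  rw [← hactive i]
  rfl

end PTA

open PTA in
theorem exists_equivalent_nrtTA_double_clocks_general
    {Q A X : Type} [Finite Q] [Finite X]
    (M : PTA Q A X) (hfin : M.trans.Finite) :
    ∃ (Q' : Type) (_ : Finite Q') (M' : PTA Q' A (X ⊕ X)),
      M'.trans.Finite ∧ M'.IsNrt ∧
      ∀ (μ : ℝ) (π : ℕ → A) (τ : ℕ → ℝ),
        AcceptsWord M' μ π τ ↔ AcceptsWord M μ π τ := by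
  refine ⟨_, inferInstance, M.doubleClocks, doubleClocks_trans_finite hfin, doubleClocks_isNrt,
    fun μ π τ => ⟨?_, ?_⟩⟩
  · rintro ⟨q, v, hrun, qf, hqf, hinf⟩
    refine ⟨_, _, hrun.of_doubleClocks, qf.1, hqf, frequently_atTop.1 ?_⟩
    exact (frequently_atTop.2 hinf).mono fun m hm => by rw [hm]
  · rintro ⟨q, v, hrun, qf, hqf, hinf⟩
    obtain ⟨b, v', hrun'⟩ := hrun.exists_doubleClocks
    have hvisits : ∃ᶠ m in atTop, ∃ b₀, q m = qf ∧ b m = b₀ :=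
      (frequently_atTop.2 hinf).mono fun m hm => ⟨b m, hm, rfl⟩
    obtain ⟨b₀, hb₀⟩ := frequently_exists.1 hvisits
    refine ⟨_, v', hrun', (qf, b₀), hqf, frequently_atTop.1 ?_⟩
    exact hb₀.mono fun m hm => by rw [hm.1, hm.2]

/-- For every (parametric) TA `M` with clock set `X` of size `n` there is an equivalent
(parametric) non-resetting-test TA with `2n` clocks (clock set `X ⊕ X`): for every
parameter interpretation and every timed ω-word, the new automaton has an accepting
parametric run over that word iff `M` does. -/
theorem exists_equivalent_nrtTA_double_clocks
    {Q A X : Type} [Finite Q] [Finite A] [Finite X]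
    (M : PTA Q A X) (hfin : M.trans.Finite) :
    ∃ (Q' : Type) (_ : Finite Q') (M' : PTA Q' A (X ⊕ X)),
      M'.trans.Finite ∧ M'.IsNrt ∧
      ∀ (μ : ℝ) (π : ℕ → A) (τ : ℕ → ℝ),
        AcceptsWord M' μ π τ ↔ AcceptsWord M μ π τ :=
  exists_equivalent_nrtTA_double_clocks_general M hfin
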